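/- arXiv:2502.16234 — 5 statements merged into one kernel-verified Lean document; each statement's English description precedes it below -/
import Mathlib

section
/- Define c_k^n(r) = (q^{-1}·η_{k+1}^n(r) - q·η_k^n(r) - r^n)/(r - α) where α = q + q^{-1} and r - α is assumed invertible. Then c_k^n(r) = c_{k-1}^n(r) + η_k^n(r) for all k ∈ ℤ, n ≥ 0. -/
theorem stmt_4 (R : Type*) [CommRing R] (q μ : Rˣ) (ν : R)
    (hν : ((μ : R) - ((μ⁻¹ : Rˣ) : R)) * ν = 1)
    (r : R) (hr : r = (μ : R) + ((μ⁻¹ : Rˣ) : R))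
    (lp lm : R)
    (hlp : lp = ((q : R)) ^ 2 * (μ : R) + (((q⁻¹ : Rˣ) : R)) ^ 2 * ((μ⁻¹ : Rˣ) : R))
    (hlm : lm = (((q⁻¹ : Rˣ) : R)) ^ 2 * (μ : R) + ((q : R)) ^ 2 * ((μ⁻¹ : Rˣ) : R))
    (η : ℤ → ℕ → R)
    (hη : ∀ (k : ℤ) (n : ℕ), η k n =
      ((q ^ k : Rˣ) : R) * (((μ ^ k : Rˣ) : R) * lp ^ n - ((μ ^ (-k) : Rˣ) : R) * lm ^ n) * ν)
    (α : R) (hα : α = (q : R) + ((q⁻¹ : Rˣ) : R))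
    (w : R) (hw : (r - α) * w = 1)
    (c : ℤ → ℕ → R)
    (hc : ∀ (k : ℤ) (n : ℕ), c k n =
      (((q⁻¹ : Rˣ) : R) * η (k + 1) n - (q : R) * η k n - r ^ n) * w)
    : ∀ (k : ℤ) (n : ℕ), c k n = c (k - 1) n + η k n := by
  intro k n
  subst hr hα
  have haa : (q : R) * ((q⁻¹ : Rˣ) : R) = 1 := by
    rw [← Units.val_mul, mul_inv_cancel, Units.val_one]
  rw [hc, hc, sub_add_cancel, hη (k + 1), hη k, hη (k - 1)]
  simp only [sub_eq_add_neg, neg_add, neg_neg, zpow_add, zpow_one, zpow_neg_one,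
    Units.val_mul]
  linear_combination (((q ^ k : Rˣ) : R) * (((μ ^ k : Rˣ) : R) * lp ^ n -
      ((μ ^ (-k) : Rˣ) : R) * lm ^ n) * ν) * hw +
    (((μ : R) + ((μ⁻¹ : Rˣ) : R)) * (((q ^ k : Rˣ) : R) * (((μ ^ k : Rˣ) : R) * lp ^ n -
      ((μ ^ (-k) : Rˣ) : R) * lm ^ n) * ν)) * w * haa
end

section
/- With c_k^n(r) = (q^{-1}·η_{k+1}^n(r) - q·η_k^n(r) - r^n)/(r - α), the identity r·c_k^n(r) = q^{-1}·c_{k+1}^n(r) + q·c_{k-1}^n(r) - r^n holds for all k ∈ ℤ and n ≥ 0. -/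
theorem stmt_5 (R : Type*) [CommRing R] (q μ : Rˣ) (ν : R)
    (hν : ((μ : R) - ((μ⁻¹ : Rˣ) : R)) * ν = 1)
    (r : R) (hr : r = (μ : R) + ((μ⁻¹ : Rˣ) : R))
    (lp lm : R)
    (hlp : lp = ((q : R)) ^ 2 * (μ : R) + (((q⁻¹ : Rˣ) : R)) ^ 2 * ((μ⁻¹ : Rˣ) : R))
    (hlm : lm = (((q⁻¹ : Rˣ) : R)) ^ 2 * (μ : R) + ((q : R)) ^ 2 * ((μ⁻¹ : Rˣ) : R))
    (η : ℤ → ℕ → R)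
    (hη : ∀ (k : ℤ) (n : ℕ), η k n =
      ((q ^ k : Rˣ) : R) * (((μ ^ k : Rˣ) : R) * lp ^ n - ((μ ^ (-k) : Rˣ) : R) * lm ^ n) * ν)
    (α : R) (hα : α = (q : R) + ((q⁻¹ : Rˣ) : R))
    (w : R) (hw : (r - α) * w = 1)
    (c : ℤ → ℕ → R)
    (hc : ∀ (k : ℤ) (n : ℕ), c k n =
      (((q⁻¹ : Rˣ) : R) * η (k + 1) n - (q : R) * η k n - r ^ n) * w)
    : ∀ (k : ℤ) (n : ℕ), r * c k n = ((q⁻¹ : Rˣ) : R) * c (k + 1) n + (q : R) * c (k - 1) n - r ^ n := by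
  have hqq : (q : R) * ((q⁻¹ : Rˣ) : R) = 1 := by
    rw [← Units.val_mul, mul_inv_cancel, Units.val_one]
  have hmm : (μ : R) * ((μ⁻¹ : Rˣ) : R) = 1 := by
    rw [← Units.val_mul, mul_inv_cancel, Units.val_one]
  have hrη : ∀ (k : ℤ) (n : ℕ), r * η k n =
      ((q⁻¹ : Rˣ) : R) * η (k + 1) n + (q : R) * η (k - 1) n := by
    intro k n
    have e1 : ((q ^ (k + 1) : Rˣ) : R) = ((q ^ k : Rˣ) : R) * (q : R) := by
      rw [zpow_add_one, Units.val_mul]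
    have e2 : ((μ ^ (k + 1) : Rˣ) : R) = ((μ ^ k : Rˣ) : R) * (μ : R) := by
      rw [zpow_add_one, Units.val_mul]
    have e3 : ((μ ^ (-(k + 1)) : Rˣ) : R) = ((μ ^ (-k) : Rˣ) : R) * ((μ⁻¹ : Rˣ) : R) := by
      have : -(k + 1) = -k - 1 := by ring
      rw [this, zpow_sub_one, Units.val_mul]
    have e4 : ((q ^ (k - 1) : Rˣ) : R) = ((q ^ k : Rˣ) : R) * ((q⁻¹ : Rˣ) : R) := by
      rw [zpow_sub_one, Units.val_mul]
    have e5 : ((μ ^ (k - 1) : Rˣ) : R) = ((μ ^ k : Rˣ) : R) * ((μ⁻¹ : Rˣ) : R) := by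
      rw [zpow_sub_one, Units.val_mul]
    have e6 : ((μ ^ (-(k - 1)) : Rˣ) : R) = ((μ ^ (-k) : Rˣ) : R) * (μ : R) := by
      have : -(k - 1) = -k + 1 := by ring
      rw [this, zpow_add_one, Units.val_mul]
    rw [hη, hη, hη, e1, e2, e3, e4, e5, e6, hr]
    linear_combination (-(((q ^ k : Rˣ) : R) * (((μ ^ k : Rˣ) : R) * (μ : R) * lp ^ n -
      ((μ ^ (-k) : Rˣ) : R) * ((μ⁻¹ : Rˣ) : R) * lm ^ n) * ν) -
      ((q ^ k : Rˣ) : R) * (((μ ^ k : Rˣ) : R) * ((μ⁻¹ : Rˣ) : R) * lp ^ n -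
      ((μ ^ (-k) : Rˣ) : R) * (μ : R) * lm ^ n) * ν) * hqq
  intro k n
  have h1 := hrη (k + 1) n
  have h2 := hrη k n
  have hk1 : k + 1 - 1 = k := by ring
  have hk2 : k - 1 + 1 = k := by ring
  rw [hk1] at h1
  rw [hc k n, hc (k + 1) n, hc (k - 1) n, hk2]
  linear_combination ((q⁻¹ : Rˣ) : R) * w * h1 - (q : R) * w * h2 - r ^ n * hw - w * r ^ n * hα
end

section
/- With c_k^n(r) = (q^{-1}·η_{k+1}^n(r) - q·η_k^n(r) - r^n)/(r - α), the identity c_k^{n+1}(r) = q·c_{k+1}^n(r) + q^{-1}·c_{k-1}^n(r) - r^n holds for all k ∈ ℤ and n ≥ 0. -/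
theorem stmt_6 (R : Type*) [CommRing R] (q μ : Rˣ) (ν : R)
    (hν : ((μ : R) - ((μ⁻¹ : Rˣ) : R)) * ν = 1)
    (r : R) (hr : r = (μ : R) + ((μ⁻¹ : Rˣ) : R))
    (lp lm : R)
    (hlp : lp = ((q : R)) ^ 2 * (μ : R) + (((q⁻¹ : Rˣ) : R)) ^ 2 * ((μ⁻¹ : Rˣ) : R))
    (hlm : lm = (((q⁻¹ : Rˣ) : R)) ^ 2 * (μ : R) + ((q : R)) ^ 2 * ((μ⁻¹ : Rˣ) : R))
    (η : ℤ → ℕ → R)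
    (hη : ∀ (k : ℤ) (n : ℕ), η k n =
      ((q ^ k : Rˣ) : R) * (((μ ^ k : Rˣ) : R) * lp ^ n - ((μ ^ (-k) : Rˣ) : R) * lm ^ n) * ν)
    (α : R) (hα : α = (q : R) + ((q⁻¹ : Rˣ) : R))
    (w : R) (hw : (r - α) * w = 1)
    (c : ℤ → ℕ → R)
    (hc : ∀ (k : ℤ) (n : ℕ), c k n =
      (((q⁻¹ : Rˣ) : R) * η (k + 1) n - (q : R) * η k n - r ^ n) * w)
    : ∀ (k : ℤ) (n : ℕ), c k (n + 1) = (q : R) * c (k + 1) n + ((q⁻¹ : Rˣ) : R) * c (k - 1) n - r ^ n := by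
  intro k n
  have hq1 : (q : R) * ((q⁻¹ : Rˣ) : R) = 1 := q.mul_inv
  have hm1 : (μ : R) * ((μ⁻¹ : Rˣ) : R) = 1 := μ.mul_inv
  have key : ((q⁻¹ : Rˣ) : R) * η (k + 1) (n + 1) - (q : R) * η k (n + 1) - r ^ (n + 1)
      = (q : R) * (((q⁻¹ : Rˣ) : R) * η (k + 1 + 1) n - (q : R) * η (k + 1) n - r ^ n)
        + ((q⁻¹ : Rˣ) : R) * (((q⁻¹ : Rˣ) : R) * η (k - 1 + 1) n - (q : R) * η (k - 1) n - r ^ n)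
        - r ^ n * (r - α) := by
    rw [show k - 1 + 1 = k from by ring]
    simp only [hη, hlp, hlm, hr, hα, zpow_add_one, zpow_sub_one, zpow_neg, mul_inv, inv_inv,
      Units.val_mul]
    linear_combination
      (((q⁻¹ : Rˣ) : R) ^ 2 * (μ : R) * ((μ⁻¹ : Rˣ) : R) * ((q ^ k : Rˣ) : R) * ν *
        (((μ ^ k : Rˣ) : R) * ((q : R) ^ 2 * (μ : R) + ((q⁻¹ : Rˣ) : R) ^ 2 * ((μ⁻¹ : Rˣ) : R)) ^ n
          - (((μ ^ k)⁻¹ : Rˣ) : R) * (((q⁻¹ : Rˣ) : R) ^ 2 * (μ : R) + (q : R) ^ 2 * ((μ⁻¹ : Rˣ) : R)) ^ n)) * hq1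
      + (((q⁻¹ : Rˣ) : R) ^ 2 * ((q ^ k : Rˣ) : R) * ν *
        (((μ ^ k : Rˣ) : R) * ((q : R) ^ 2 * (μ : R) + ((q⁻¹ : Rˣ) : R) ^ 2 * ((μ⁻¹ : Rˣ) : R)) ^ n
          - (((μ ^ k)⁻¹ : Rˣ) : R) * (((q⁻¹ : Rˣ) : R) ^ 2 * (μ : R) + (q : R) ^ 2 * ((μ⁻¹ : Rˣ) : R)) ^ n)) * hm1
  rw [hc, hc, hc]
  linear_combination w * key - r ^ n * hw
end

section
/- Define λ_k^n(r) = -η_{k+1}^n(r) + η_k^n(r) - c_k^n(r)·t^2, where t is a further element of the ring. Then λ_k^{n+1}(r) = q·λ_{k+1}^n(r) + q^{-1}·λ_{k-1}^n(r) + r^n·t^2 for all k ∈ ℤ and n ≥ 0. -/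
theorem stmt_7 (R : Type*) [CommRing R] (q μ : Rˣ) (ν : R)
    (hν : ((μ : R) - ((μ⁻¹ : Rˣ) : R)) * ν = 1)
    (r : R) (hr : r = (μ : R) + ((μ⁻¹ : Rˣ) : R))
    (lp lm : R)
    (hlp : lp = ((q : R)) ^ 2 * (μ : R) + (((q⁻¹ : Rˣ) : R)) ^ 2 * ((μ⁻¹ : Rˣ) : R))
    (hlm : lm = (((q⁻¹ : Rˣ) : R)) ^ 2 * (μ : R) + ((q : R)) ^ 2 * ((μ⁻¹ : Rˣ) : R))
    (η : ℤ → ℕ → R)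
    (hη : ∀ (k : ℤ) (n : ℕ), η k n =
      ((q ^ k : Rˣ) : R) * (((μ ^ k : Rˣ) : R) * lp ^ n - ((μ ^ (-k) : Rˣ) : R) * lm ^ n) * ν)
    (α : R) (hα : α = (q : R) + ((q⁻¹ : Rˣ) : R))
    (w : R) (hw : (r - α) * w = 1)
    (c : ℤ → ℕ → R)
    (hc : ∀ (k : ℤ) (n : ℕ), c k n =
      (((q⁻¹ : Rˣ) : R) * η (k + 1) n - (q : R) * η k n - r ^ n) * w)
    (t : R) (lam : ℤ → ℕ → R)
    (hlam : ∀ (k : ℤ) (n : ℕ), lam k n = -η (k + 1) n + η k n - c k n * t ^ 2)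
    : ∀ (k : ℤ) (n : ℕ), lam k (n + 1) = (q : R) * lam (k + 1) n + ((q⁻¹ : Rˣ) : R) * lam (k - 1) n + r ^ n * t ^ 2 := by
  have hηrec : ∀ (k : ℤ) (n : ℕ),
      η k (n + 1) = (q : R) * η (k + 1) n + ((q⁻¹ : Rˣ) : R) * η (k - 1) n := by
    intro k n
    rw [hη, hη, hη]
    have e1 : (q ^ (k + 1) : Rˣ) = q ^ k * q := by rw [zpow_add_one]
    have e2 : (q ^ (k - 1) : Rˣ) = q ^ k * q⁻¹ := by rw [zpow_sub_one]
    have e3 : (μ ^ (k + 1) : Rˣ) = μ ^ k * μ := by rw [zpow_add_one]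
    have e4 : (μ ^ (k - 1) : Rˣ) = μ ^ k * μ⁻¹ := by rw [zpow_sub_one]
    have e5 : (μ ^ (-(k + 1)) : Rˣ) = μ ^ (-k) * μ⁻¹ := by
      rw [neg_add, zpow_add, zpow_neg_one]
    have e6 : (μ ^ (-(k - 1)) : Rˣ) = μ ^ (-k) * μ := by
      rw [show -(k - 1) = -k + 1 by ring, zpow_add_one]
    rw [e1, e2, e3, e4, e5, e6, hlp, hlm]
    push_cast
    ring
  have hcrec : ∀ (k : ℤ) (n : ℕ),
      c k (n + 1) = (q : R) * c (k + 1) n + ((q⁻¹ : Rˣ) : R) * c (k - 1) n - r ^ n := by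
    intro k n
    have hk : k - 1 + 1 = k := by ring
    have hk2 : k + 1 - 1 = k := by ring
    rw [hc, hc, hc, hηrec, hηrec, hk, hk2, hα] at *
    linear_combination (-(r ^ n)) * hw
  intro k n
  have hk : k - 1 + 1 = k := by ring
  rw [hlam, hlam, hlam, hηrec, hηrec, hcrec, hk]
  ring
end

section
/- Let R = ℚ(q^{1/2}) (or any field of characteristic zero in which q is transcendental over ℚ) and consider η_k^n as a polynomial in r via its binomial expansion η_k^n(r) = Σ_{j=0}^n C(n,j) q^{2(2j-n)+k} γ_{2j-n+k}(r), where γ_m(r) is the Chebyshev-like polynomial with γ_0 = 0, γ_1 = 1, γ_{m+1} = r γ_m - γ_{m-1} and γ_{-m} = -γ_m. Then for k > 0, η_k^n is a polynomial in r of degree n + k - 1 with leading coefficient q^{2n+k}; for k = 0 and n ≥ 1, it has degree n - 1 with leading coefficient q^{2n} - q^{-2n}; and for k < 0, it has degree n + |k| - 1 with leading coefficient -q^{-(2n+|k|)}. -/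
/-! The recurrence identifies `γ m` with the rescaled Chebyshev polynomial `S (m - 1)`, so
`γ m` is monic of degree `m - 1` for `m > 0`, `γ 0 = 0` and `γ (-m) = -γ m`; in particular
`deg γ m < |m|`. In `η k n` the index `2j - n + k` reaches its largest absolute value `n + |k|`
at only one end of the range when `k ≠ 0`, and that term alone gives the degree and leading
coefficient. For `k = 0` both ends reach `n`, and their terms combine to
`(q^{2n} - q^{-2n}) γ n`, which is nonzero as `q` is not a root of unity. Reflecting
`j ↦ n - j` shows `η (-k) n` at `q` is `-η k n` at `q⁻¹`, which reduces `k < 0` to `k > 0`. -/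

open Polynomial Finset

namespace Polynomial.Chebyshev

variable {R : Type*} [CommRing R]

theorem eq_S_sub_one {γ : ℤ → R[X]} (h0 : γ 0 = 0) (h1 : γ 1 = 1)
    (hrec : ∀ m, γ (m + 1) = X * γ m - γ (m - 1)) (m : ℤ) : γ m = S R (m - 1) := by
  induction m using Chebyshev.induct with
  | zero => simp [h0]
  | one => simp [h1]
  | add_two n ih1 ih0 =>
    rw [show (n : ℤ) + 2 = n + 1 + 1 by ring, hrec, add_sub_cancel_right, ih1, ih0,
      add_sub_cancel_right, add_sub_cancel_right, S_add_one]
  | neg_add_one n ih0 ih1 =>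
    have h := hrec (-n)
    rw [ih0, ih1, add_sub_cancel_right] at h
    have hS := S_sub_one R (-n - 1)
    rw [sub_add_cancel] at hS
    linear_combination h - hS

variable [Nontrivial R]

theorem monic_S_natCast_and_natDegree (n : ℕ) : (S R n).Monic ∧ (S R n).natDegree = n := by
  induction n using Nat.twoStepInduction with
  | zero => simp
  | one => simp
  | more n ih0 ih1 =>
    have hXS : (X * S R (n + 1 : ℕ)).Monic := monic_X.mul ih1.1
    have hdeg : (X * S R (n + 1 : ℕ)).natDegree = n + 2 := by
      rw [natDegree_X_mul ih1.1.ne_zero, ih1.2]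
    have hlt : (S R n).natDegree < (X * S R (n + 1 : ℕ)).natDegree := by omega
    have hrec : S R (n + 2 : ℕ) = X * S R (n + 1 : ℕ) - S R n := by
      push_cast; exact S_add_two R n
    rw [hrec]
    exact ⟨hXS.sub_of_left (degree_lt_degree hlt),
      by rw [natDegree_sub_eq_left_of_natDegree_lt hlt, hdeg]⟩

theorem degree_S_natCast (n : ℕ) : (S R n).degree = n := by
  obtain ⟨hmonic, hdeg⟩ := monic_S_natCast_and_natDegree (R := R) n
  rw [degree_eq_natDegree hmonic.ne_zero, hdeg]

theorem degree_S_natCast_sub_one_lt (m : ℕ) : (S R (m - 1)).degree < m := by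
  cases m with
  | zero => simp
  | succ n =>
    rw [Nat.cast_succ, add_sub_cancel_right, degree_S_natCast]
    exact_mod_cast n.lt_succ_self

theorem degree_S_lt (z : ℤ) : (S R z).degree < (z + 1).natAbs := by
  obtain ⟨m, hm | hm⟩ := (z + 1).eq_nat_or_neg
  · rw [hm, eq_sub_of_add_eq hm, Int.natAbs_natCast]
    exact degree_S_natCast_sub_one_lt m
  · rw [hm, eq_sub_of_add_eq hm, Int.natAbs_neg, Int.natAbs_natCast, S_neg_sub_one, degree_neg]
    exact degree_S_natCast_sub_one_lt m

end Polynomial.Chebyshev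

open Polynomial.Chebyshev (S S_neg_sub_one degree_S_lt degree_S_natCast
  monic_S_natCast_and_natDegree)

section
variable {R : Type*} [CommRing R] [Nontrivial R]

theorem degree_sum_C_mul_S_lt {ι : Type*} (s : Finset ι) (a : ι → R) (z : ι → ℤ) {d : ℕ}
    (hz : ∀ i ∈ s, (z i + 1).natAbs ≤ d) : (∑ i ∈ s, C (a i) * S R (z i)).degree < d := by
  refine (degree_sum_le _ _).trans_lt ((Finset.sup_lt_iff (WithBot.bot_lt_coe d)).2 fun i hi => ?_)
  calc (C (a i) * S R (z i)).degree ≤ (S R (z i)).degree := by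
        rw [← smul_eq_C_mul]; exact degree_smul_le ..
    _ < (z i + 1).natAbs := degree_S_lt (z i)
    _ ≤ d := by exact_mod_cast hz i hi

theorem natDegree_and_leadingCoeff_add_C_mul_S {p : R[X]} {c : R} (hc : c ≠ 0) {d : ℕ}
    (hp : p.degree < d) :
    (p + C c * S R d).natDegree = d ∧ (p + C c * S R d).leadingCoeff = c := by
  obtain ⟨hmonic, -⟩ := monic_S_natCast_and_natDegree (R := R) d
  have hdeg : (C c * S R d).degree = d := by
    rw [degree_mul' (by rwa [leadingCoeff_C, hmonic.leadingCoeff, mul_one]), degree_C hc,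
      zero_add, degree_S_natCast]
  have hlt : p.degree < (C c * S R d).degree := hdeg ▸ hp
  exact ⟨natDegree_eq_of_degree_eq_some ((degree_add_eq_right_of_degree_lt hlt).trans hdeg),
    by rw [leadingCoeff_add_of_degree_lt hlt, leadingCoeff_mul_monic hmonic, leadingCoeff_C]⟩

end

section
variable {F : Type*} [Field F]

/-- `η k n` with `γ m` written as `S (m - 1)`. -/
noncomputable def etaPoly (q : F) (k : ℤ) (n : ℕ) : F[X] :=
  ∑ j ∈ range (n + 1),
    C ((n.choose j : F) * q ^ (2 * (2 * (j : ℤ) - n) + k)) * S F (2 * j - n + k - 1)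

theorem etaPoly_natCast {q : F} (hq : q ≠ 0) (n : ℕ) {m : ℕ} (hm : 0 < m) :
    (etaPoly q m n).natDegree = n + m - 1 ∧ (etaPoly q m n).leadingCoeff = q ^ (2 * n + m) := by
  have htop : C ((n.choose n : F) * q ^ (2 * (2 * (n : ℤ) - n) + m)) * S F (2 * n - n + m - 1) =
      C (q ^ (2 * n + m)) * S F (n + m - 1 : ℕ) := by
    rw [Nat.choose_self, Nat.cast_one, one_mul,
      show 2 * (2 * (n : ℤ) - n) + m = (2 * n + m : ℕ) by push_cast; ring, zpow_natCast,
      show 2 * (n : ℤ) - n + m - 1 = (n + m - 1 : ℕ) by omega]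
  rw [etaPoly, sum_range_succ, htop]
  exact natDegree_and_leadingCoeff_add_C_mul_S (pow_ne_zero _ hq)
    (degree_sum_C_mul_S_lt _ _ _ fun j hj => by rw [mem_range] at hj; omega)

theorem etaPoly_neg (q : F) (k : ℤ) (n : ℕ) : etaPoly q (-k) n = -etaPoly q⁻¹ k n := by
  rw [etaPoly, etaPoly, ← sum_range_reflect, ← sum_neg_distrib]
  refine sum_congr rfl fun j hj => ?_
  have hjn : j ≤ n := Nat.lt_succ_iff.mp (mem_range.mp hj)
  rw [add_tsub_cancel_right, Nat.choose_symm hjn, Nat.cast_sub hjn, inv_zpow',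
    show 2 * (n - j : ℤ) - n + -k - 1 = -(2 * j - n + k) - 1 by ring, S_neg_sub_one,
    show 2 * (2 * (n - j : ℤ) - n) + -k = -(2 * (2 * j - n) + k) by ring]
  ring

theorem etaPoly_neg_natCast {q : F} (hq : q ≠ 0) (n : ℕ) {m : ℕ} (hm : 0 < m) :
    (etaPoly q (-m) n).natDegree = n + m - 1 ∧
      (etaPoly q (-m) n).leadingCoeff = -(q ^ (2 * n + m))⁻¹ := by
  rw [etaPoly_neg, natDegree_neg, leadingCoeff_neg, ← inv_pow]
  exact (etaPoly_natCast (inv_ne_zero hq) n hm).imp id (congrArg _)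

theorem etaPoly_zero {q : F} {n : ℕ} (hn : 0 < n) (hq : q ^ (2 * n) ≠ (q ^ (2 * n))⁻¹) :
    (etaPoly q 0 n).natDegree = n - 1 ∧
      (etaPoly q 0 n).leadingCoeff = q ^ (2 * n) - (q ^ (2 * n))⁻¹ := by
  obtain ⟨n, rfl⟩ : ∃ n', n = n' + 1 := ⟨n - 1, by omega⟩
  have hends : C (q ^ (2 * -((n + 1 : ℕ) : ℤ))) * S F (-((n + 1 : ℕ) : ℤ) - 1) +
      C (q ^ (2 * (2 * ((n + 1 : ℕ) : ℤ) - (n + 1 : ℕ)))) *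
        S F (2 * ((n + 1 : ℕ) : ℤ) - (n + 1 : ℕ) - 1) =
      C (q ^ (2 * (n + 1)) - (q ^ (2 * (n + 1)))⁻¹) * S F n := by
    rw [S_neg_sub_one, show 2 * -((n + 1 : ℕ) : ℤ) = -(2 * (n + 1) : ℕ) by push_cast; ring,
      show 2 * (2 * ((n + 1 : ℕ) : ℤ) - (n + 1 : ℕ)) = (2 * (n + 1) : ℕ) by push_cast; ring,
      show 2 * ((n + 1 : ℕ) : ℤ) - (n + 1 : ℕ) - 1 = n by push_cast; ring,
      Nat.cast_succ, add_sub_cancel_right, zpow_neg, zpow_natCast, C_sub]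
    ring
  rw [etaPoly, sum_range_succ, sum_range_succ', add_assoc]
  simp only [Nat.choose_zero_right, Nat.choose_self, Nat.cast_one, one_mul, Nat.cast_zero,
    mul_zero, zero_sub, add_zero]
  rw [hends]
  exact natDegree_and_leadingCoeff_add_C_mul_S (sub_ne_zero.2 hq)
    (degree_sum_C_mul_S_lt _ _ _ fun j hj => by rw [mem_range] at hj; omega)

end

theorem stmt_13 (F : Type*) [Field F] [CharZero F] (q : F)
    (hq : Transcendental ℚ q)
    (γ : ℤ → Polynomial F)
    (hγ0 : γ 0 = 0) (hγ1 : γ 1 = 1)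
    (hγrec : ∀ m : ℤ, γ (m + 1) = Polynomial.X * γ m - γ (m - 1))
    (η : ℤ → ℕ → Polynomial F)
    (hη : ∀ (k : ℤ) (n : ℕ), η k n = ∑ j ∈ Finset.range (n + 1),
      (n.choose j : Polynomial F) * Polynomial.C (q ^ (2 * (2 * (j : ℤ) - n) + k)) *
        γ (2 * (j : ℤ) - n + k)) :
    (∀ (n : ℕ) (m : ℕ), 0 < m →
      (η (m : ℤ) n).natDegree = n + m - 1 ∧ (η (m : ℤ) n).leadingCoeff = q ^ (2 * n + m)) ∧
    (∀ n : ℕ, 1 ≤ n →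
      (η 0 n).natDegree = n - 1 ∧ (η 0 n).leadingCoeff = q ^ (2 * n) - (q ^ (2 * n))⁻¹) ∧
    (∀ (n : ℕ) (m : ℕ), 0 < m →
      (η (-(m : ℤ)) n).natDegree = n + m - 1 ∧
        (η (-(m : ℤ)) n).leadingCoeff = -(q ^ (2 * n + m))⁻¹) := by
  have hγS : γ = fun m => S F (m - 1) := funext (Chebyshev.eq_S_sub_one hγ0 hγ1 hγrec)
  obtain rfl : η = etaPoly q := by
    funext k n
    simp only [hη, etaPoly, hγS, map_mul, map_natCast]
  have hq0 : q ≠ 0 := fun h => hq (h ▸ isAlgebraic_zero)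
  have hpow_ne_inv (n : ℕ) (hn : 0 < n) : q ^ (2 * n) ≠ (q ^ (2 * n))⁻¹ := by
    intro h
    apply hq.pow (show 0 < 2 * n + 2 * n by omega)
    rw [pow_add]
    nth_rw 2 [h]
    rw [mul_inv_cancel₀ (pow_ne_zero _ hq0)]
    exact isAlgebraic_one
  exact ⟨fun n _ hm => etaPoly_natCast hq0 n hm, fun n hn => etaPoly_zero hn (hpow_ne_inv n hn),
    fun n _ hm => etaPoly_neg_natCast hq0 n hm⟩
end
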